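/- arXiv:1808.09595 — 5 statements merged into one kernel-verified Lean document; each statement's English description precedes it below -/
import Mathlib

section
/- Let A be an n×n real symmetric positive definite matrix with diagonal part D (a diagonal matrix with the positive diagonal entries of A). Let η₀ be a real number with η₀ ≥ λ_max(D⁻¹A) (the largest eigenvalue of D⁻¹A), let ω be a real number with 0 < ω < 2/η₀, and let η be a real number with 0 < η ≤ ω(2 − ωη₀). Then the damped Jacobi iteration matrix K = I − ωD⁻¹A satisfies the smoothing property: for every vector v ∈ ℝⁿ, (Kv)ᵀA(Kv) ≤ vᵀAv − η·(Av)ᵀD⁻¹(Av). -/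
open Matrix

/-- **Smoothing property of damped Jacobi.**
Let `A` be an `n × n` real symmetric positive definite matrix with diagonal part `D`.
Let `η₀ ≥ λ_max(D⁻¹A)`, `0 < ω < 2/η₀` and `0 < η ≤ ω(2 − ωη₀)`.
Then the damped Jacobi iteration matrix `K = I − ωD⁻¹A` satisfies
`(Kv)ᵀA(Kv) ≤ vᵀAv − η(Av)ᵀD⁻¹(Av)` for every `v ∈ ℝⁿ`. -/
theorem stmt0 {n : ℕ} (A : Matrix (Fin n) (Fin n) ℝ) (hA : A.PosDef)
    (D : Matrix (Fin n) (Fin n) ℝ) (hD : D = Matrix.diagonal fun i => A i i)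
    (η₀ ω η : ℝ)
    (hη₀ : ∀ μ ∈ spectrum ℝ (D⁻¹ * A), μ ≤ η₀)
    (hω : 0 < ω) (hω' : ω < 2 / η₀)
    (hη : 0 < η) (hη' : η ≤ ω * (2 - ω * η₀)) :
    ∀ v : Fin n → ℝ,
      ((1 - ω • (D⁻¹ * A)) *ᵥ v) ⬝ᵥ (A *ᵥ ((1 - ω • (D⁻¹ * A)) *ᵥ v))
        ≤ v ⬝ᵥ (A *ᵥ v) - η * ((A *ᵥ v) ⬝ᵥ (D⁻¹ *ᵥ (A *ᵥ v))) := by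
  intro v
  have hAt : Aᵀ = A := hA.1
  set d : Fin n → ℝ := fun i => A i i with hd
  have hdpos : ∀ i, 0 < d i := fun i => by
    have := hA.dotProduct_mulVec_pos (x := Pi.single i 1) (by
      intro h
      have := congrFun h i
      simp at this)
    simpa using this
  set e : Fin n → ℝ := fun i => Real.sqrt (d i) with he
  have hepos : ∀ i, 0 < e i := fun i => Real.sqrt_pos.2 (hdpos i)
  have hee : ∀ i, e i * e i = d i := fun i => Real.mul_self_sqrt (hdpos i).le
  set E : Matrix (Fin n) (Fin n) ℝ := diagonal e with hE
  have hEinv : E⁻¹ = diagonal (fun i => (e i)⁻¹) := by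
    apply inv_eq_right_inv
    rw [hE, diagonal_mul_diagonal]
    convert diagonal_one using 2
    exact funext fun i => mul_inv_cancel₀ (hepos i).ne'
  have hDinv : D⁻¹ = diagonal (fun i => (d i)⁻¹) := by
    apply inv_eq_right_inv
    rw [hD, diagonal_mul_diagonal]
    convert diagonal_one using 2
    exact funext fun i => mul_inv_cancel₀ (hdpos i).ne'
  have hEE : E * E = D := by
    rw [hE, hD, diagonal_mul_diagonal]
    exact congrArg _ (funext hee)
  have hEiEi : E⁻¹ * E⁻¹ = D⁻¹ := by
    rw [hEinv, hDinv, diagonal_mul_diagonal]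
    exact congrArg _ (funext fun i => by rw [← mul_inv, hee])
  have hEiE : E⁻¹ * E = 1 := by
    rw [hEinv, hE, diagonal_mul_diagonal, ← diagonal_one]
    exact congrArg _ (funext fun i => inv_mul_cancel₀ (hepos i).ne')
  have hEEi : E * E⁻¹ = 1 := by
    rw [hEinv, hE, diagonal_mul_diagonal, ← diagonal_one]
    exact congrArg _ (funext fun i => mul_inv_cancel₀ (hepos i).ne')
  set S : Matrix (Fin n) (Fin n) ℝ := E⁻¹ * A * E⁻¹ with hS
  have hconj : E⁻¹ * S * E = D⁻¹ * A := by
    rw [hS]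
    calc E⁻¹ * (E⁻¹ * A * E⁻¹) * E = (E⁻¹ * E⁻¹) * A * (E⁻¹ * E) := by
          simp only [Matrix.mul_assoc]
      _ = D⁻¹ * A := by rw [hEiE, hEiEi, Matrix.mul_one]
  have hspec : spectrum ℝ S = spectrum ℝ (D⁻¹ * A) := by
    rw [← hconj]
    exact (spectrum.units_conjugate'
      (u := ⟨E, E⁻¹, hEEi, hEiE⟩) (a := S)).symm
  have hEih : (E⁻¹)ᴴ = E⁻¹ := by
    rw [hEinv]
    simp [conjTranspose, diagonal_transpose]
  have hSh : S.IsHermitian := by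
    have := isHermitian_mul_mul_conjTranspose (E⁻¹) hA.1
    rwa [hEih] at this
  set T : Matrix (Fin n) (Fin n) ℝ := η₀ • 1 - S with hT
  have hTh : T.IsHermitian := by
    show Tᴴ = T
    rw [hT, conjTranspose_sub, conjTranspose_smul, conjTranspose_one, hSh.eq, star_trivial]
  have hT' : T = algebraMap ℝ (Matrix (Fin n) (Fin n) ℝ) η₀ - S := by
    rw [hT, Algebra.algebraMap_eq_smul_one]
  have hclaim : ∀ x ∈ spectrum ℝ T, 0 ≤ x := by
    intro x hx
    rw [hT', ← spectrum.singleton_sub_eq] at hx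
    obtain ⟨a, ha, b, hb, hab⟩ := hx
    rw [Set.mem_singleton_iff] at ha
    rw [hspec] at hb
    have := hη₀ b hb
    rw [← hab, ha]
    show (0:ℝ) ≤ η₀ - b
    linarith
  have hTpsd : T.PosSemidef := by
    apply (Matrix.IsHermitian.posSemidef_iff_eigenvalues_nonneg hTh).2
    exact fun i => hclaim _ (Matrix.IsHermitian.eigenvalues_mem_spectrum_real hTh i)
  have hpsd : (η₀ • D - A).PosSemidef := by
    have h2 := hTpsd.mul_mul_conjTranspose_same E
    have hEh : Eᴴ = E := by rw [hE]; simp [conjTranspose, diagonal_transpose]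
    have h3 : E * T * Eᴴ = η₀ • D - A := by
      rw [hEh, hT]
      simp only [Matrix.sub_mul, Matrix.mul_sub, Matrix.mul_smul, Matrix.smul_mul,
        Matrix.mul_one, Matrix.one_mul]
      rw [hEE]
      congr 1
      calc E * (E⁻¹ * A * E⁻¹) * E = (E * E⁻¹) * A * (E⁻¹ * E) := by
            simp only [Matrix.mul_assoc]
        _ = A := by rw [hEEi, hEiE, Matrix.one_mul, Matrix.mul_one]
    rwa [h3] at h2
  set u : Fin n → ℝ := A *ᵥ v with hu
  set w : Fin n → ℝ := D⁻¹ *ᵥ u with hw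
  have hDw : D *ᵥ w = u := by
    rw [hw, mulVec_mulVec, hDinv, hD, diagonal_mul_diagonal]
    have : (fun i => d i * (d i)⁻¹) = fun _ => (1:ℝ) :=
      funext fun i => mul_inv_cancel₀ (hdpos i).ne'
    rw [this, diagonal_one, one_mulVec]
  have key : w ⬝ᵥ (A *ᵥ w) ≤ η₀ * (u ⬝ᵥ w) := by
    have h0 := hpsd.dotProduct_mulVec_nonneg w
    rw [star_trivial, sub_mulVec, dotProduct_sub, smul_mulVec, dotProduct_smul,
      hDw, smul_eq_mul] at h0
    have : w ⬝ᵥ u = u ⬝ᵥ w := dotProduct_comm _ _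
    linarith [h0, this ▸ h0]
  have hs_nonneg : 0 ≤ u ⬝ᵥ w := by
    have := (PosSemidef.diagonal (d := fun i => (d i)⁻¹)
      (fun i => (inv_pos.2 (hdpos i)).le)).dotProduct_mulVec_nonneg u
    rwa [star_trivial, ← hDinv, ← hw] at this
  have hsymm : v ⬝ᵥ (A *ᵥ w) = u ⬝ᵥ w := by
    rw [dotProduct_mulVec, ← mulVec_transpose, hAt, ← hu]
  have hKv : (1 - ω • (D⁻¹ * A)) *ᵥ v = v - ω • w := by
    rw [Matrix.sub_mulVec, Matrix.one_mulVec, smul_mulVec, ← Matrix.mulVec_mulVec, ← hu, ← hw]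
  have hwu : w ⬝ᵥ u = u ⬝ᵥ w := dotProduct_comm _ _
  rw [hKv, Matrix.mulVec_sub, Matrix.mulVec_smul]
  simp only [sub_dotProduct, dotProduct_sub, dotProduct_smul, smul_dotProduct, smul_eq_mul]
  rw [← hu, hsymm, hwu]
  nlinarith [key, hs_nonneg, mul_nonneg hs_nonneg (sub_nonneg.2 hη'), sq_nonneg ω,
    mul_le_mul_of_nonneg_left key (mul_nonneg hω.le hω.le)]
end

section
/- Let A be an n×n real symmetric positive definite matrix with diagonal part D, let P be an n×m real matrix of full column rank (m < n), set the restriction R = (1/2)Pᵀ, the Galerkin coarse-grid matrix A_c = R A P, and the coarse-grid correction operator T = I − P A_c⁻¹ R A. Suppose K is an n×n matrix satisfying the smoothing property: for all v ∈ ℝⁿ, (Kv)ᵀA(Kv) ≤ vᵀAv − η(Av)ᵀD⁻¹(Av) with η > 0; and suppose the approximation property holds: there is κ > 0 such that for every v ∈ ℝⁿ there exists w ∈ ℝᵐ with (v − Pw)ᵀD(v − Pw) ≤ κ·vᵀAv. Then A_c is invertible, κ ≥ η, and the two-grid operator satisfies, for every v ∈ ℝⁿ, (KTv)ᵀA(KTv)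 ≤ (1 − η/κ)·vᵀAv. -/
open Matrix

lemma cs_diag {n : ℕ} (d : Fin n → ℝ) (hd : ∀ i, 0 < d i) (x y : Fin n → ℝ) :
    (x ⬝ᵥ y) ^ 2 ≤ (∑ i, x i ^ 2 * (d i)⁻¹) * (∑ i, d i * y i ^ 2) := by
  have h := Finset.sum_mul_sq_le_sq_mul_sq Finset.univ
      (fun i => x i / Real.sqrt (d i)) (fun i => Real.sqrt (d i) * y i)
  have hs : ∀ i, Real.sqrt (d i) ≠ 0 := fun i =>
    ne_of_gt (Real.sqrt_pos.mpr (hd i))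
  have h1 : ∀ i, x i / Real.sqrt (d i) * (Real.sqrt (d i) * y i) = x i * y i := by
    intro i
    rw [div_mul_eq_mul_div, mul_comm (Real.sqrt (d i)) (y i), ← mul_assoc,
      mul_div_assoc, div_self (hs i), mul_one]
  have h2 : ∀ i, (x i / Real.sqrt (d i)) ^ 2 = x i ^ 2 * (d i)⁻¹ := by
    intro i; rw [div_pow, Real.sq_sqrt (hd i).le, div_eq_mul_inv]
  have h3 : ∀ i, (Real.sqrt (d i) * y i) ^ 2 = d i * y i ^ 2 := by
    intro i; rw [mul_pow, Real.sq_sqrt (hd i).le]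
  simp only [h1, h2, h3] at h
  simpa [dotProduct] using h

/-- **Two-grid convergence from smoothing and approximation properties (Ruge–Stüben).**
`A` SPD with diagonal part `D`, `P` a prolongation of full column rank (`m < n`),
`R = (1/2)Pᵀ`, `A_c = R A P`, `T = I − P A_c⁻¹ R A`.  If `K` satisfies the smoothing
property with constant `η > 0` and the approximation property holds with constant `κ > 0`,
then `A_c` is invertible, `η ≤ κ`, and `‖KTv‖_A² ≤ (1 − η/κ)‖v‖_A²` for all `v`. -/
theorem stmt1 {n m : ℕ} (hm : m < n)
    (A : Matrix (Fin n) (Fin n) ℝ) (hA : A.PosDef)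
    (D : Matrix (Fin n) (Fin n) ℝ) (hD : D = Matrix.diagonal fun i => A i i)
    (P : Matrix (Fin n) (Fin m) ℝ) (hP : P.rank = m)
    (K : Matrix (Fin n) (Fin n) ℝ) (η : ℝ) (hη : 0 < η)
    (hK : ∀ v : Fin n → ℝ,
      (K *ᵥ v) ⬝ᵥ (A *ᵥ (K *ᵥ v))
        ≤ v ⬝ᵥ (A *ᵥ v) - η * ((A *ᵥ v) ⬝ᵥ (D⁻¹ *ᵥ (A *ᵥ v))))
    (κ : ℝ) (hκ : 0 < κ)
    (happrox : ∀ v : Fin n → ℝ, ∃ w : Fin m → ℝ,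
      (v - P *ᵥ w) ⬝ᵥ (D *ᵥ (v - P *ᵥ w)) ≤ κ * (v ⬝ᵥ (A *ᵥ v))) :
    let R := (1 / 2 : ℝ) • Pᵀ
    let Ac := R * A * P
    let T := (1 : Matrix (Fin n) (Fin n) ℝ) - P * Ac⁻¹ * (R * A)
    IsUnit Ac ∧ η ≤ κ ∧
      ∀ v : Fin n → ℝ,
        ((K * T) *ᵥ v) ⬝ᵥ (A *ᵥ ((K * T) *ᵥ v)) ≤ (1 - η / κ) * (v ⬝ᵥ (A *ᵥ v)) := by
  intro R Ac T
  -- basic facts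
  have hAT : Aᵀ = A := by
    rw [← conjTranspose_eq_transpose_of_trivial]; exact hA.1
  set d : Fin n → ℝ := fun i => A i i with hd_def
  have hd : ∀ i, 0 < d i := by
    intro i
    have h0 : (Pi.single i 1 : Fin n → ℝ) ≠ 0 := by
      intro h
      have := congrFun h i
      simp at this
    have := hA.dotProduct_mulVec_pos h0
    simpa [mulVec_single, single_dotProduct] using this
  have hDinv : D⁻¹ = Matrix.diagonal (fun i => (d i)⁻¹) := by
    apply Matrix.inv_eq_right_inv
    have h1 : (fun i => d i * (d i)⁻¹) = fun _ => (1:ℝ) :=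
      funext fun i => mul_inv_cancel₀ (hd i).ne'
    rw [hD, diagonal_mul_diagonal, h1, diagonal_one]
  have hs_form : ∀ x : Fin n → ℝ, x ⬝ᵥ (D⁻¹ *ᵥ x) = ∑ i, x i ^ 2 * (d i)⁻¹ := by
    intro x
    rw [hDinv]
    simp only [dotProduct, mulVec_diagonal]
    exact Finset.sum_congr rfl fun i _ => by ring
  have hDform : ∀ x : Fin n → ℝ, x ⬝ᵥ (D *ᵥ x) = ∑ i, d i * x i ^ 2 := by
    intro x
    rw [hD]
    simp only [dotProduct, mulVec_diagonal]
    exact Finset.sum_congr rfl fun i _ => by ring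
  have hs_nn : ∀ x : Fin n → ℝ, 0 ≤ x ⬝ᵥ (D⁻¹ *ᵥ x) := by
    intro x
    rw [hs_form]
    exact Finset.sum_nonneg fun i _ =>
      mul_nonneg (sq_nonneg _) (inv_nonneg.mpr (hd i).le)
  have hsymm : ∀ x y : Fin n → ℝ, x ⬝ᵥ (A *ᵥ y) = y ⬝ᵥ (A *ᵥ x) := by
    intro x y
    rw [dotProduct_mulVec, ← mulVec_transpose, hAT, dotProduct_comm]
  have hPdot : ∀ (z : Fin m → ℝ) (y : Fin n → ℝ),
      (P *ᵥ z) ⬝ᵥ y = z ⬝ᵥ (Pᵀ *ᵥ y) := by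
    intro z y
    calc (P *ᵥ z) ⬝ᵥ y = y ⬝ᵥ (P *ᵥ z) := dotProduct_comm _ _
      _ = (y ᵥ* P) ⬝ᵥ z := dotProduct_mulVec _ _ _
      _ = (Pᵀ *ᵥ y) ⬝ᵥ z := by rw [mulVec_transpose]
      _ = z ⬝ᵥ (Pᵀ *ᵥ y) := dotProduct_comm _ _
  have hposd : ∀ x : Fin n → ℝ, 0 ≤ x ⬝ᵥ (A *ᵥ x) := by
    intro x
    have := hA.posSemidef.dotProduct_mulVec_nonneg x
    rwa [star_trivial] at this
  -- injectivity of P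
  have hPinj : Function.Injective P.mulVecLin := by
    rw [← LinearMap.ker_eq_bot, ← Submodule.finrank_eq_zero]
    have h1 := P.mulVecLin.finrank_range_add_finrank_ker
    have h2 : Module.finrank ℝ (LinearMap.range P.mulVecLin) = m := hP
    rw [h2] at h1
    simp only [Module.finrank_pi, Fintype.card_fin] at h1
    omega
  -- Ac positive definite
  have hAcEq : Ac = (1 / 2 : ℝ) • (Pᵀ * A * P) := by
    show ((1 / 2 : ℝ) • Pᵀ) * A * P = _
    rw [Matrix.smul_mul, Matrix.smul_mul]
  have hPAPform : ∀ x : Fin m → ℝ,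
      x ⬝ᵥ ((Pᵀ * A * P) *ᵥ x) = (P *ᵥ x) ⬝ᵥ (A *ᵥ (P *ᵥ x)) := by
    intro x
    rw [← mulVec_mulVec, ← mulVec_mulVec, ← hPdot, dotProduct_comm]
  have hPAPh : (Pᵀ * A * P).IsHermitian := by
    have := (hA.posSemidef.conjTranspose_mul_mul_same P).1
    rwa [conjTranspose_eq_transpose_of_trivial] at this
  have hAc : Ac.PosDef := by
    rw [hAcEq]
    refine Matrix.PosDef.of_dotProduct_mulVec_pos ?_ ?_
    · show ((1 / 2 : ℝ) • (Pᵀ * A * P))ᴴ = _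
      rw [conjTranspose_smul, hPAPh.eq]
      norm_num
    · intro x hx
      have hPx : P *ᵥ x ≠ 0 := by
        intro h
        apply hx
        have : P.mulVecLin x = P.mulVecLin 0 := by simpa [mulVecLin_apply] using h
        exact hPinj this
      have h1 := hA.dotProduct_mulVec_pos hPx
      rw [star_trivial] at h1 ⊢
      rw [smul_mulVec, dotProduct_smul, hPAPform]
      simp only [smul_eq_mul]
      linarith
  have hAcUnit : IsUnit Ac := hAc.isUnit
  have hdet : IsUnit Ac.det := isUnit_iff_ne_zero.mpr hAc.det_pos.ne'
  -- matrix identity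
  have hRA : R * A = (1 / 2 : ℝ) • (Pᵀ * A) := Matrix.smul_mul _ _ _
  have hPAPAc : (Pᵀ * A * P) * Ac⁻¹ = (2 : ℝ) • (1 : Matrix (Fin m) (Fin m) ℝ) := by
    have h2Ac : Pᵀ * A * P = (2 : ℝ) • Ac := by
      rw [hAcEq, smul_smul]; norm_num
    rw [h2Ac, Matrix.smul_mul, Matrix.mul_nonsing_inv _ hdet]
  have hM : Pᵀ * (A * (P * (Ac⁻¹ * (R * A)))) = Pᵀ * A := by
    simp only [← Matrix.mul_assoc]
    rw [hPAPAc, Matrix.smul_mul, Matrix.one_mul, Matrix.smul_mul, hRA, smul_smul]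
    norm_num
  -- key projection fact (vector form)
  have f1 : ∀ v : Fin n → ℝ,
      Pᵀ *ᵥ (A *ᵥ (P *ᵥ (Ac⁻¹ *ᵥ ((R * A) *ᵥ v)))) = Pᵀ *ᵥ (A *ᵥ v) := by
    intro v
    simp only [mulVec_mulVec]
    rw [hM]
  -- key inequality from approximation property
  have key : ∀ u : Fin n → ℝ, Pᵀ *ᵥ (A *ᵥ u) = 0 →
      u ⬝ᵥ (A *ᵥ u) ≤ κ * ((A *ᵥ u) ⬝ᵥ (D⁻¹ *ᵥ (A *ᵥ u))) := by
    intro u h1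
    obtain ⟨w, hw⟩ := happrox u
    set e := u - P *ᵥ w with he
    set x := A *ᵥ u with hx
    set t := u ⬝ᵥ (A *ᵥ u) with ht
    set s := x ⬝ᵥ (D⁻¹ *ᵥ x) with hs
    have ht_nn : 0 ≤ t := hposd u
    have hsnn : 0 ≤ s := hs_nn x
    have h2 : x ⬝ᵥ e = t := by
      have hxP : x ⬝ᵥ (P *ᵥ w) = 0 := by
        rw [dotProduct_mulVec, ← mulVec_transpose, h1, zero_dotProduct]
      rw [he, dotProduct_sub, hxP, sub_zero, hx, dotProduct_comm]
    have hcs := cs_diag d hd x e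
    rw [← hs_form, ← hDform, h2] at hcs
    have hchain : t ^ 2 ≤ s * (κ * t) :=
      hcs.trans (mul_le_mul_of_nonneg_left hw hsnn)
    rcases eq_or_lt_of_le ht_nn with h | h
    · rw [← h]
      positivity
    · nlinarith
  -- norm decrease of the projection, and A-orthogonality
  have hTfacts : ∀ v : Fin n → ℝ,
      Pᵀ *ᵥ (A *ᵥ (T *ᵥ v)) = 0 ∧ (T *ᵥ v) ⬝ᵥ (A *ᵥ (T *ᵥ v)) ≤ v ⬝ᵥ (A *ᵥ v) := by
    intro v
    have hTv : T *ᵥ v = v - P *ᵥ (Ac⁻¹ *ᵥ ((R * A) *ᵥ v)) := by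
      show ((1 : Matrix (Fin n) (Fin n) ℝ) - P * Ac⁻¹ * (R * A)) *ᵥ v = _
      rw [Matrix.sub_mulVec, Matrix.one_mulVec]
      congr 1
      rw [Matrix.mul_assoc, ← mulVec_mulVec, ← mulVec_mulVec]
    set z : Fin m → ℝ := Ac⁻¹ *ᵥ ((R * A) *ᵥ v) with hz
    set p : Fin n → ℝ := P *ᵥ z with hp
    have hf1 : Pᵀ *ᵥ (A *ᵥ p) = Pᵀ *ᵥ (A *ᵥ v) := f1 v
    have horth : Pᵀ *ᵥ (A *ᵥ (T *ᵥ v)) = 0 := by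
      rw [hTv, Matrix.mulVec_sub, Matrix.mulVec_sub, hf1, sub_self]
    refine ⟨horth, ?_⟩
    have hvAp : v ⬝ᵥ (A *ᵥ p) = z ⬝ᵥ (Pᵀ *ᵥ (A *ᵥ v)) := by
      rw [hsymm, hp, hPdot]
    have hpAp : p ⬝ᵥ (A *ᵥ p) = v ⬝ᵥ (A *ᵥ p) := by
      rw [hvAp]
      calc p ⬝ᵥ (A *ᵥ p) = z ⬝ᵥ (Pᵀ *ᵥ (A *ᵥ p)) := by
            rw [hp, ← hPdot, dotProduct_comm]
        _ = z ⬝ᵥ (Pᵀ *ᵥ (A *ᵥ v)) := by rw [hf1]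
    have hvAp_nn : 0 ≤ v ⬝ᵥ (A *ᵥ p) := by
      rw [hvAp, hz]
      have hRAv : (R * A) *ᵥ v = (1 / 2 : ℝ) • (Pᵀ *ᵥ (A *ᵥ v)) := by
        rw [hRA, smul_mulVec, mulVec_mulVec]
      rw [hRAv, Matrix.mulVec_smul, dotProduct_comm, dotProduct_smul]
      have := hAc.inv.posSemidef.dotProduct_mulVec_nonneg (Pᵀ *ᵥ (A *ᵥ v))
      rw [star_trivial] at this
      simp only [smul_eq_mul]
      linarith
    have hpAv : p ⬝ᵥ (A *ᵥ v) = v ⬝ᵥ (A *ᵥ p) := hsymm p v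
    rw [hTv]
    rw [show v - P *ᵥ (Ac⁻¹ *ᵥ ((R * A) *ᵥ v)) = v - p from rfl]
    rw [sub_dotProduct, Matrix.mulVec_sub, dotProduct_sub, dotProduct_sub,
      hpAp, hpAv]
    linarith
  -- existence of a nonzero A-orthogonal vector
  have hexist : ∃ u : Fin n → ℝ, u ≠ 0 ∧ Pᵀ *ᵥ (A *ᵥ u) = 0 := by
    have hker : LinearMap.ker (Pᵀ * A).mulVecLin ≠ ⊥ := by
      intro hk
      have hinj : Function.Injective (Pᵀ * A).mulVecLin := LinearMap.ker_eq_bot.mp hk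
      have := LinearMap.finrank_le_finrank_of_injective hinj
      simp only [Module.finrank_pi, Fintype.card_fin] at this
      omega
    obtain ⟨u, hu, hu0⟩ := Submodule.exists_mem_ne_zero_of_ne_bot hker
    refine ⟨u, hu0, ?_⟩
    have : (Pᵀ * A).mulVecLin u = 0 := hu
    rwa [mulVecLin_apply, ← mulVec_mulVec] at this
  -- η ≤ κ
  have hηκ : η ≤ κ := by
    obtain ⟨u, hu0, hu⟩ := hexist
    have hkey := key u hu
    have hKu := hK u
    have hKu_nn : 0 ≤ (K *ᵥ u) ⬝ᵥ (A *ᵥ (K *ᵥ u)) := hposd (K *ᵥ u)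
    have ht_pos : 0 < u ⬝ᵥ (A *ᵥ u) := by
      have := hA.dotProduct_mulVec_pos hu0
      rwa [star_trivial] at this
    set t := u ⬝ᵥ (A *ᵥ u)
    set s := (A *ᵥ u) ⬝ᵥ (D⁻¹ *ᵥ (A *ᵥ u))
    have hspos : 0 < s := by nlinarith
    nlinarith
  refine ⟨hAcUnit, hηκ, ?_⟩
  intro v
  obtain ⟨horth, hdec⟩ := hTfacts v
  have hkey := key (T *ᵥ v) horth
  have hKu := hK (T *ᵥ v)
  set t := (T *ᵥ v) ⬝ᵥ (A *ᵥ (T *ᵥ v)) with htd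
  set s := (A *ᵥ (T *ᵥ v)) ⬝ᵥ (D⁻¹ *ᵥ (A *ᵥ (T *ᵥ v))) with hsd
  have hKT : (K * T) *ᵥ v = K *ᵥ (T *ᵥ v) := (mulVec_mulVec _ _ _).symm
  rw [hKT]
  have ht_nn : 0 ≤ t := hposd (T *ᵥ v)
  have hfrac : 0 ≤ 1 - η / κ := by
    rw [sub_nonneg, div_le_one hκ]; exact hηκ
  have h5 : t / κ ≤ s := (div_le_iff₀ hκ).mpr (by linarith)
  have h6 : η * (t / κ) ≤ η * s := mul_le_mul_of_nonneg_left h5 hη.le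
  have h7 : (1 - η / κ) * t = t - η * (t / κ) := by ring
  calc (K *ᵥ (T *ᵥ v)) ⬝ᵥ (A *ᵥ (K *ᵥ (T *ᵥ v))) ≤ t - η * s := hKu
    _ ≤ (1 - η / κ) * t := by linarith
    _ ≤ (1 - η / κ) * (v ⬝ᵥ (A *ᵥ v)) := mul_le_mul_of_nonneg_left hdec hfrac
end

section
/- For every real number α with 1 < α < 2 and every integer m ≥ 2, the Toeplitz coefficient of the fractional Laplacian stiffness matrix is strictly negative: −(m+2)^{3−α} + 4(m+1)^{3−α} − 6m^{3−α} + 4(m−1)^{3−α} − (m−2)^{3−α} < 0. -/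
open Set Real

/-- AM-GM style strict inequality for negative powers:
for `p < 0` and `x > 1`, `2 * x^p < (x-1)^p + (x+1)^p`. -/
lemma neg_rpow_midpoint (p : ℝ) (hp : p < 0) (x : ℝ) (hx : 1 < x) :
    2 * x ^ p < (x - 1) ^ p + (x + 1) ^ p := by
  have ha : (0:ℝ) < x - 1 := by linarith
  have hb : (0:ℝ) < x + 1 := by linarith
  have hxpos : (0:ℝ) < x := by linarith
  have hprod : (x - 1) * (x + 1) = x ^ 2 - 1 := by ring
  have h1 : (x ^ 2 - 1 : ℝ) < x ^ 2 := by linarith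
  have h0 : (0:ℝ) < x ^ 2 - 1 := by nlinarith
  have hlt : (x ^ 2 : ℝ) ^ p < (x ^ 2 - 1) ^ p :=
    Real.rpow_lt_rpow_of_neg h0 h1 hp
  have hsq : (x ^ 2 : ℝ) ^ p = (x ^ p) ^ 2 := by
    rw [show (x:ℝ)^2 = x * x by ring, Real.mul_rpow hxpos.le hxpos.le]; ring
  have hmul : (x - 1) ^ p * (x + 1) ^ p = (x ^ 2 - 1) ^ p := by
    rw [← Real.mul_rpow ha.le hb.le, hprod]
  -- a^p + b^p ≥ 2 √(a^p b^p) > 2 x^p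
  have hapos : (0:ℝ) < (x - 1) ^ p := Real.rpow_pos_of_pos ha p
  have hbpos : (0:ℝ) < (x + 1) ^ p := Real.rpow_pos_of_pos hb p
  have hxp : (0:ℝ) < x ^ p := Real.rpow_pos_of_pos hxpos p
  nlinarith [sq_nonneg ((x - 1) ^ p - (x + 1) ^ p), sq_nonneg (x ^ p),
    mul_pos hapos hbpos]

lemma hasDerivAt_shift_rpow (c p x : ℝ) (hx : x + c ≠ 0) :
    HasDerivAt (fun y : ℝ => (y + c) ^ p) (p * (x + c) ^ (p - 1)) x := by
  have h : HasDerivAt (fun y : ℝ => y + c) 1 x := (hasDerivAt_id x).add_const c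
  have := h.rpow_const (p := p) (Or.inl hx)
  simpa using this

/-- The second-difference function is strictly convex on `[1, ∞)`. -/
lemma g_strictConvex (β : ℝ) (hβ1 : 1 < β) (hβ2 : β < 2) :
    StrictConvexOn ℝ (Set.Ici (1:ℝ))
      (fun x : ℝ => (x + 1) ^ β - 2 * x ^ β + (x - 1) ^ β) := by
  set g : ℝ → ℝ := fun x => (x + 1) ^ β - 2 * x ^ β + (x - 1) ^ β with hg
  have hβpos : (0:ℝ) < β := by linarith
  -- continuity
  have hcont : ContinuousOn g (Set.Ici (1:ℝ)) := by
    apply ContinuousOn.add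
    apply ContinuousOn.sub
    · exact ((continuous_id.add continuous_const).continuousOn).rpow_const
        (fun x _ => Or.inr hβpos.le)
    · exact (continuousOn_const.mul ((continuous_id.continuousOn).rpow_const
        (fun x _ => Or.inr hβpos.le)))
    · exact ((continuous_id.sub continuous_const).continuousOn).rpow_const
        (fun x _ => Or.inr hβpos.le)
  apply strictConvexOn_of_deriv2_pos (convex_Ici 1) hcont
  intro x hx
  rw [interior_Ici] at hx
  have hx1 : (1:ℝ) < x := hx
  have hxp : (0:ℝ) < x := by linarith
  have hxm : (0:ℝ) < x - 1 := by linarith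
  have hxpl : (0:ℝ) < x + 1 := by linarith
  -- first derivative on Ioi 1
  set φ : ℝ → ℝ := fun y => β * (y + 1) ^ (β - 1) - 2 * (β * y ^ (β - 1))
      + β * (y - 1) ^ (β - 1) with hφ
  have hderiv1 : ∀ y : ℝ, 1 < y → HasDerivAt g (φ y) y := by
    intro y hy
    have h1 := hasDerivAt_shift_rpow 1 β y (by linarith)
    have h2 := hasDerivAt_shift_rpow 0 β y (by linarith)
    simp only [add_zero] at h2
    have h3 : HasDerivAt (fun y : ℝ => (y - 1) ^ β) (β * (y - 1) ^ (β - 1)) y := by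
      have := hasDerivAt_shift_rpow (-1) β y (by linarith)
      simpa [sub_eq_add_neg] using this
    exact (h1.sub (h2.const_mul 2)).add h3
  have hderiv2 : ∀ y : ℝ, 1 < y →
      HasDerivAt φ (β * ((β-1) * (y + 1) ^ (β - 2)) - 2 * (β * ((β-1) * y ^ (β - 2)))
        + β * ((β-1) * (y - 1) ^ (β - 2))) y := by
    intro y hy
    have h1 := hasDerivAt_shift_rpow 1 (β-1) y (by linarith)
    have h2 := hasDerivAt_shift_rpow 0 (β-1) y (by linarith)
    simp only [add_zero] at h2
    have h3 : HasDerivAt (fun y : ℝ => (y - 1) ^ (β-1)) ((β-1) * (y - 1) ^ (β - 1 - 1)) y := by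
      have := hasDerivAt_shift_rpow (-1) (β-1) y (by linarith)
      simpa [sub_eq_add_neg] using this
    have e : β - 2 = β - 1 - 1 := by ring
    rw [e]
    exact ((h1.const_mul β).sub ((h2.const_mul β).const_mul 2)).add (h3.const_mul β)
  -- compute second derivative
  have hEq : deriv g =ᶠ[nhds x] φ := by
    filter_upwards [Ioi_mem_nhds hx1] with y hy
    exact (hderiv1 y hy).deriv
  have h2nd : deriv^[2] g x = β * ((β-1) * (x + 1) ^ (β - 2))
      - 2 * (β * ((β-1) * x ^ (β - 2))) + β * ((β-1) * (x - 1) ^ (β - 2)) := by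
    have : deriv^[2] g x = deriv (deriv g) x := by
      simp [Function.iterate_succ, Function.comp]
    rw [this, hEq.deriv_eq]
    exact (hderiv2 x hx1).deriv
  rw [h2nd]
  have hkey := neg_rpow_midpoint (β - 2) (by linarith) x hx1
  have hβ1pos : (0:ℝ) < β * (β - 1) := by nlinarith
  nlinarith [hβ1pos, hkey]

/-- **Negativity of the far Toeplitz coefficients of the fractional Laplacian
stiffness matrix.**  For `1 < α < 2` and integer `m ≥ 2`,
`−(m+2)^{3−α} + 4(m+1)^{3−α} − 6m^{3−α} + 4(m−1)^{3−α} − (m−2)^{3−α} < 0`. -/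
theorem stmt2 (α : ℝ) (h1 : 1 < α) (h2 : α < 2) (m : ℕ) (hm : 2 ≤ m) :
    -((m : ℝ) + 2) ^ (3 - α) + 4 * ((m : ℝ) + 1) ^ (3 - α) - 6 * (m : ℝ) ^ (3 - α)
      + 4 * ((m : ℝ) - 1) ^ (3 - α) - ((m : ℝ) - 2) ^ (3 - α) < 0 := by
  set β := 3 - α with hβdef
  have hβ1 : 1 < β := by rw [hβdef]; linarith
  have hβ2 : β < 2 := by rw [hβdef]; linarith
  have hm2 : (2:ℝ) ≤ (m:ℝ) := by exact_mod_cast hm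
  have hconv := g_strictConvex β hβ1 hβ2
  have hxmem : (m:ℝ) - 1 ∈ Set.Ici (1:ℝ) := Set.mem_Ici.mpr (by linarith)
  have hymem : (m:ℝ) + 1 ∈ Set.Ici (1:ℝ) := Set.mem_Ici.mpr (by linarith)
  have hne : (m:ℝ) - 1 ≠ (m:ℝ) + 1 := by intro h; linarith [h]
  have := hconv.2 hxmem hymem hne one_half_pos one_half_pos (by norm_num)
  simp only [smul_eq_mul] at this
  rw [show (1/2:ℝ) * ((m:ℝ) - 1) + (1/2:ℝ) * ((m:ℝ) + 1) = (m:ℝ) by ring] at this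
  have e1 : (m:ℝ) - 1 + 1 = (m:ℝ) := by ring
  have e2 : (m:ℝ) - 1 - 1 = (m:ℝ) - 2 := by ring
  have e3 : (m:ℝ) + 1 + 1 = (m:ℝ) + 2 := by ring
  have e4 : (m:ℝ) + 1 - 1 = (m:ℝ) := by ring
  simp only [e1, e2, e3, e4] at this
  linarith
end

section
/- For every real number α with 1 < α < 2 and every real number x with 0 < x ≤ 1, one has d(x) := (2/x)·((1+x)^{3−α} − 1) − (3−α)·((1+x)^{2−α} + 1) > 0. Consequently, for every integer i ≥ 1, −2((i+1)^{3−α} − i^{3−α}) + (3−α)((i+1)^{2−α} + i^{2−α}) = −i^{2−α} d(1/i) < 0. -/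
open Real

/-- `d(x) = (2/x)((1+x)^{3−α} − 1) − (3−α)((1+x)^{2−α} + 1)`. -/
noncomputable def dFun (α x : ℝ) : ℝ :=
  (2 / x) * ((1 + x) ^ (3 - α) - 1) - (3 - α) * ((1 + x) ^ (2 - α) + 1)

/-- Tangent-line inequality from strict concavity of `t ↦ t^γ`, `0<γ<1`. -/
lemma gPos {γ x : ℝ} (hγ0 : 0 < γ) (hγ1 : γ < 1) (hx : 0 < x) :
    1 < (1 + x) ^ γ - γ * x * (1 + x) ^ (γ - 1) := by
  have hu : (0:ℝ) < 1 + x := by linarith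
  have hs : -1 ≤ -(x / (1 + x)) := by
    rw [neg_le_neg_iff, div_le_one hu]; linarith
  have hs' : -(x / (1 + x)) ≠ 0 := by
    simp only [ne_eq, neg_eq_zero, div_eq_zero_iff]
    push_neg
    exact ⟨hx.ne', hu.ne'⟩
  have key := _root_.rpow_one_add_lt_one_add_mul_self hs hs' hγ0 hγ1
  have h1 : 1 + -(x / (1 + x)) = (1 + x)⁻¹ := by field_simp; ring
  rw [h1, Real.inv_rpow hu.le] at key
  have hpow : (0:ℝ) < (1 + x) ^ γ := Real.rpow_pos_of_pos hu γ
  have h2 := mul_lt_mul_of_pos_left key hpow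
  rw [mul_inv_cancel₀ hpow.ne'] at h2
  have hsub : (1 + x) ^ (γ - 1) = (1 + x) ^ γ / (1 + x) := Real.rpow_sub_one hu.ne' γ
  rw [hsub]
  have h3 : (1 + x) ^ γ * (1 + γ * -(x / (1 + x)))
      = (1 + x) ^ γ - γ * x * ((1 + x) ^ γ / (1 + x)) := by
    field_simp; ring
  linarith [h3 ▸ h2]

/-- The auxiliary function `f x = 2((1+x)^β − 1) − βx((1+x)^{β−1}+1)`. -/
noncomputable def fFun (β x : ℝ) : ℝ :=
  2 * ((1 + x) ^ β - 1) - β * x * ((1 + x) ^ (β - 1) + 1)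

lemma fFun_hasDerivAt {β x : ℝ} (hx : -1 < x) :
    HasDerivAt (fFun β)
      (2 * (β * (1 + x) ^ (β - 1)) -
        β * (((1 + x) ^ (β - 1) + 1) + x * ((β - 1) * (1 + x) ^ (β - 1 - 1)))) x := by
  have hu : (1:ℝ) + x ≠ 0 := by intro h; nlinarith
  have h1 : HasDerivAt (fun t : ℝ => (1 + t) ^ β) (β * (1 + x) ^ (β - 1)) x := by
    have := (Real.hasDerivAt_rpow_const (x := 1 + x) (p := β) (Or.inl hu)).comp x
      ((hasDerivAt_id x).const_add 1)
    simpa [Function.comp_def] using this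
  have h2 : HasDerivAt (fun t : ℝ => (1 + t) ^ (β - 1)) ((β - 1) * (1 + x) ^ (β - 1 - 1)) x := by
    have := (Real.hasDerivAt_rpow_const (x := 1 + x) (p := β - 1) (Or.inl hu)).comp x
      ((hasDerivAt_id x).const_add 1)
    simpa [Function.comp_def] using this
  have h3 : HasDerivAt (fun t : ℝ => β * t * ((1 + t) ^ (β - 1) + 1))
      (β * (((1 + x) ^ (β - 1) + 1) + x * ((β - 1) * (1 + x) ^ (β - 1 - 1)))) x := by
    have hm : HasDerivAt (fun t : ℝ => t * ((1 + t) ^ (β - 1) + 1))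
        (1 * ((1 + x) ^ (β - 1) + 1) + x * ((β - 1) * (1 + x) ^ (β - 1 - 1))) x :=
      (hasDerivAt_id x).mul (h2.add_const 1)
    have : HasDerivAt (fun y : ℝ => β * (y * ((1 + y) ^ (β - 1) + 1)))
        (β * (1 * ((1 + x) ^ (β - 1) + 1) + x * ((β - 1) * (1 + x) ^ (β - 1 - 1)))) x :=
      hm.const_mul β
    convert this using 1
    · ext t; ring
    · ring
  have : HasDerivAt (fun y : ℝ => 2 * ((1 + y) ^ β - 1) - β * y * ((1 + y) ^ (β - 1) + 1))
      (2 * (β * (1 + x) ^ (β - 1)) -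
        β * (((1 + x) ^ (β - 1) + 1) + x * ((β - 1) * (1 + x) ^ (β - 1 - 1)))) x :=
    ((h1.sub_const 1).const_mul 2).sub h3
  exact this

lemma fFun_pos {β x : ℝ} (hβ1 : 1 < β) (hβ2 : β < 2) (hx : 0 < x) : 0 < fFun β x := by
  have hmono : StrictMonoOn (fFun β) (Set.Ici (0:ℝ)) := by
    apply strictMonoOn_of_deriv_pos (convex_Ici 0)
    · intro t ht
      exact (fFun_hasDerivAt (by simp at ht; linarith)).continuousAt.continuousWithinAt
    · intro t ht
      rw [interior_Ici] at ht
      have ht' : (0:ℝ) < t := ht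
      rw [(fFun_hasDerivAt (by linarith)).deriv]
      have hg := gPos (γ := β - 1) (by linarith) (by linarith) ht'
      have hu : (0:ℝ) < 1 + t := by linarith
      have := mul_lt_mul_of_pos_left hg (show (0:ℝ) < β by linarith)
      nlinarith [this]
  have h0 : fFun β 0 = 0 := by simp [fFun]
  have := hmono (Set.self_mem_Ici) (Set.mem_Ici.mpr hx.le) hx
  rwa [h0] at this

lemma x_mul_dFun {α x : ℝ} (hx : x ≠ 0) : x * dFun α x = fFun (3 - α) x := by
  unfold dFun fFun
  have h : (3:ℝ) - α - 1 = 2 - α := by ring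
  rw [h]
  field_simp

/-- For `1 < α < 2`: `d(x) > 0` on `(0,1]`, and consequently, for every integer `i ≥ 1`,
`−2((i+1)^{3−α} − i^{3−α}) + (3−α)((i+1)^{2−α} + i^{2−α}) = −i^{2−α} d(1/i) < 0`. -/
theorem stmt3 (α : ℝ) (h1 : 1 < α) (h2 : α < 2) :
    (∀ x : ℝ, 0 < x → x ≤ 1 → 0 < dFun α x) ∧
    ∀ i : ℕ, 1 ≤ i →
      (-2 * (((i : ℝ) + 1) ^ (3 - α) - (i : ℝ) ^ (3 - α))
          + (3 - α) * (((i : ℝ) + 1) ^ (2 - α) + (i : ℝ) ^ (2 - α))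
        = -(i : ℝ) ^ (2 - α) * dFun α (1 / (i : ℝ))) ∧
      -2 * (((i : ℝ) + 1) ^ (3 - α) - (i : ℝ) ^ (3 - α))
          + (3 - α) * (((i : ℝ) + 1) ^ (2 - α) + (i : ℝ) ^ (2 - α)) < 0 := by
  have hdpos : ∀ x : ℝ, 0 < x → x ≤ 1 → 0 < dFun α x := by
    intro x hx _
    have hf := fFun_pos (β := 3 - α) (by linarith) (by linarith) hx
    rw [← x_mul_dFun hx.ne'] at hf
    by_contra h
    push_neg at h
    nlinarith
  refine ⟨hdpos, ?_⟩
  intro i hi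
  have hn : (1:ℝ) ≤ (i : ℝ) := by exact_mod_cast hi
  have hn0 : (0:ℝ) < (i : ℝ) := by linarith
  set n : ℝ := (i : ℝ)
  have hn1 : (0:ℝ) < n + 1 := by linarith
  have hratio : ∀ p : ℝ, (1 + 1 / n) ^ p = (n + 1) ^ p / n ^ p := by
    intro p
    have : (1:ℝ) + 1 / n = (n + 1) / n := by field_simp
    rw [this, Real.div_rpow hn1.le hn0.le]
  have hA : (0:ℝ) < n ^ (3 - α) := Real.rpow_pos_of_pos hn0 _
  have hC : (0:ℝ) < n ^ (2 - α) := Real.rpow_pos_of_pos hn0 _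
  have hCn : n ^ (2 - α) * n = n ^ (3 - α) := by
    rw [show (3:ℝ) - α = (2 - α) + 1 by ring, Real.rpow_add_one hn0.ne']
  have hmulp : ∀ p : ℝ, (n + 1) ^ p = n ^ p * (1 + 1 / n) ^ p := by
    intro p
    rw [show n + 1 = n * (1 + 1 / n) by field_simp, Real.mul_rpow hn0.le (by positivity)]
  have heq : -2 * ((n + 1) ^ (3 - α) - n ^ (3 - α))
      + (3 - α) * ((n + 1) ^ (2 - α) + n ^ (2 - α))
      = -n ^ (2 - α) * dFun α (1 / n) := by
    unfold dFun
    rw [hmulp (3 - α), hmulp (2 - α), show (2:ℝ) / (1 / n) = 2 * n by field_simp]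
    linear_combination (2 * (1 + 1 / n) ^ (3 - α) - 2) * hCn
  refine ⟨heq, ?_⟩
  rw [heq]
  have hd := hdpos (1 / n) (by positivity) (by
    rw [div_le_one hn0]; linarith)
  nlinarith [mul_pos hC hd]
end

section
/- For every real number α with 1 < α < 2, one has 7 + 3^{3−α} − 2^{5−α} > 0 and 1 < (8 − 2^{4−α}) / (2(7 + 3^{3−α} − 2^{5−α})) < 5/2. -/
open Real Set

private lemma expderiv (L t : ℝ) :
    HasDerivAt (fun x => Real.exp (L * x)) (L * Real.exp (L * t)) t := by
  simpa [mul_comm] using ((hasDerivAt_id t).const_mul L).exp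

private lemma log23 : Real.log 2 < Real.log 3 :=
  Real.log_lt_log (by norm_num) (by norm_num)

private lemma h916 : 9 * Real.log 3 < 16 * Real.log 2 := by
  have := Real.log_lt_log (by positivity) (show (3:ℝ)^(9:ℕ) < (2:ℝ)^(16:ℕ) by norm_num)
  rw [Real.log_pow, Real.log_pow] at this
  push_cast at this
  linarith

private lemma h1524 : 15 * Real.log 3 < 24 * Real.log 2 := by
  have := Real.log_lt_log (by positivity) (show (3:ℝ)^(15:ℕ) < (2:ℝ)^(24:ℕ) by norm_num)
  rw [Real.log_pow, Real.log_pow] at this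
  push_cast at this
  linarith

private lemma hlog3gt1 : (1:ℝ) < Real.log 3 := by
  rw [Real.lt_log_iff_exp_lt (by norm_num)]
  calc Real.exp 1 < 2.7182818286 := Real.exp_one_lt_d9
    _ < 3 := by norm_num

private lemma hsq : 2 * (Real.log 2)^2 < (Real.log 3)^2 := by
  have h2 : Real.log 2 < 0.6931471808 := Real.log_two_lt_d9
  have h2' : 0 < Real.log 2 := Real.log_pos (by norm_num)
  nlinarith [hlog3gt1]

private lemma factR (t : ℝ) (ht0 : 0 ≤ t) (ht1 : t ≤ 1) :
    Real.exp (Real.log 3 * t) ≤ 3/2 * Real.exp (Real.log 2 * t) := by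
  have h : Real.log 3 * t = Real.log 2 * t + (Real.log 3 - Real.log 2) * t := by ring
  rw [h, Real.exp_add]
  have h1 : Real.exp ((Real.log 3 - Real.log 2) * t) ≤ 3/2 := by
    have hle : (Real.log 3 - Real.log 2) * t ≤ Real.log 3 - Real.log 2 := by
      nlinarith [log23]
    calc Real.exp ((Real.log 3 - Real.log 2) * t)
        ≤ Real.exp (Real.log 3 - Real.log 2) := Real.exp_le_exp.2 hle
      _ = 3/2 := by
          rw [Real.exp_sub, Real.exp_log (by norm_num : (0:ℝ) < 3),
            Real.exp_log (by norm_num : (0:ℝ) < 2)]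
  nlinarith [Real.exp_pos (Real.log 2 * t)]

private lemma factE (t : ℝ) (ht0 : 0 ≤ t) :
    Real.exp (Real.log 2 * t) ≤ Real.exp (Real.log 3 * t) :=
  Real.exp_le_exp.2 (mul_le_mul_of_nonneg_right (le_of_lt log23) ht0)

/-- A: `0 < 7 + 3·3^t − 8·2^t` for `t ∈ (0,1)`. -/
private lemma lemA (t : ℝ) (ht0 : 0 < t) (ht1 : t < 1) :
    0 < 7 + 3 * Real.exp (Real.log 3 * t) - 8 * Real.exp (Real.log 2 * t) := by
  set D : ℝ → ℝ := fun x => 7 + 3 * Real.exp (Real.log 3 * x) - 8 * Real.exp (Real.log 2 * x) with hD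
  have hderiv : ∀ x : ℝ, HasDerivAt D
      (3 * (Real.log 3 * Real.exp (Real.log 3 * x)) - 8 * (Real.log 2 * Real.exp (Real.log 2 * x))) x := by
    intro x
    have := (((expderiv (Real.log 3) x).const_mul 3).const_add 7).sub
      ((expderiv (Real.log 2) x).const_mul 8)
    simpa [hD, Pi.sub_def] using this
  have hanti : StrictAntiOn D (Icc (0:ℝ) 1) := by
    apply strictAntiOn_of_deriv_neg (convex_Icc 0 1)
    · apply Continuous.continuousOn
      fun_prop
    · intro x hx
      rw [interior_Icc] at hx
      rw [(hderiv x).deriv]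
      have hR := factR x (le_of_lt hx.1) (le_of_lt hx.2)
      have hX := Real.exp_pos (Real.log 2 * x)
      have hL3 : 0 < Real.log 3 := Real.log_pos (by norm_num)
      nlinarith [h916, mul_le_mul_of_nonneg_left hR (by positivity : (0:ℝ) ≤ 3 * Real.log 3)]
  have h01 : D t > D 1 := hanti (by constructor <;> linarith) (by norm_num) ht1
  have hD1 : D 1 = 0 := by
    simp only [hD, mul_one, Real.exp_log (by norm_num : (0:ℝ) < 3),
      Real.exp_log (by norm_num : (0:ℝ) < 2)]
    ring
  rw [hD1] at h01
  show (0:ℝ) < D t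
  linarith

/-- C: `12·2^t − 5·3^t < 9` for `t ∈ (0,1)`. -/
private lemma lemC (t : ℝ) (ht0 : 0 < t) (ht1 : t < 1) :
    12 * Real.exp (Real.log 2 * t) - 5 * Real.exp (Real.log 3 * t) < 9 := by
  set G : ℝ → ℝ := fun x => 12 * Real.exp (Real.log 2 * x) - 5 * Real.exp (Real.log 3 * x) with hG
  have hderiv : ∀ x : ℝ, HasDerivAt G
      (12 * (Real.log 2 * Real.exp (Real.log 2 * x)) - 5 * (Real.log 3 * Real.exp (Real.log 3 * x))) x := by
    intro x
    have := ((expderiv (Real.log 2) x).const_mul 12).sub ((expderiv (Real.log 3) x).const_mul 5)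
    simpa [hG, Pi.sub_def] using this
  have hmono : StrictMonoOn G (Icc (0:ℝ) 1) := by
    apply strictMonoOn_of_deriv_pos (convex_Icc 0 1)
    · apply Continuous.continuousOn
      fun_prop
    · intro x hx
      rw [interior_Icc] at hx
      rw [(hderiv x).deriv]
      have hR := factR x (le_of_lt hx.1) (le_of_lt hx.2)
      have hX := Real.exp_pos (Real.log 2 * x)
      have hL3 : 0 < Real.log 3 := Real.log_pos (by norm_num)
      nlinarith [h1524, mul_le_mul_of_nonneg_left hR (by positivity : (0:ℝ) ≤ 5 * Real.log 3)]
  have h01 : G t < G 1 := hmono (by constructor <;> linarith) (by norm_num) ht1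
  have hG1 : G 1 = 9 := by
    simp only [hG, mul_one, Real.exp_log (by norm_num : (0:ℝ) < 3),
      Real.exp_log (by norm_num : (0:ℝ) < 2)]
    ring
  rw [hG1] at h01
  show G t < 9
  linarith

/-- B: `1 < 2·2^t − 3^t` for `t ∈ (0,1)`. -/
private lemma lemB (t : ℝ) (ht0 : 0 < t) (ht1 : t < 1) :
    1 < 2 * Real.exp (Real.log 2 * t) - Real.exp (Real.log 3 * t) := by
  set F : ℝ → ℝ := fun x => 2 * Real.exp (Real.log 2 * x) - Real.exp (Real.log 3 * x) with hF
  have hderiv : ∀ x : ℝ, HasDerivAt F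
      (2 * (Real.log 2 * Real.exp (Real.log 2 * x)) - Real.log 3 * Real.exp (Real.log 3 * x)) x := by
    intro x
    have := ((expderiv (Real.log 2) x).const_mul 2).sub (expderiv (Real.log 3) x)
    simpa [hF, Pi.sub_def] using this
  have hderiv1 : deriv F = fun x =>
      2 * (Real.log 2 * Real.exp (Real.log 2 * x)) - Real.log 3 * Real.exp (Real.log 3 * x) :=
    funext fun x => (hderiv x).deriv
  have hderiv2 : ∀ x : ℝ, HasDerivAt (deriv F)
      ((2 * Real.log 2) * (Real.log 2 * Real.exp (Real.log 2 * x))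
        - Real.log 3 * (Real.log 3 * Real.exp (Real.log 3 * x))) x := by
    intro x
    rw [hderiv1]
    have h1 := (expderiv (Real.log 2) x).const_mul (2 * Real.log 2)
    have h2 := (expderiv (Real.log 3) x).const_mul (Real.log 3)
    have := h1.sub h2
    simpa [Pi.sub_def, mul_assoc] using this
  have hconc : StrictConcaveOn ℝ (Icc (0:ℝ) 1) F := by
    apply strictConcaveOn_of_deriv2_neg (convex_Icc 0 1)
    · apply Continuous.continuousOn
      fun_prop
    · intro x hx
      rw [interior_Icc] at hx
      have : deriv^[2] F x = deriv (deriv F) x := by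
        simp [Function.iterate_succ, Function.comp]
      rw [this, (hderiv2 x).deriv]
      have hE := factE x (le_of_lt hx.1)
      have hX := Real.exp_pos (Real.log 2 * x)
      have hL2 : 0 < Real.log 2 := Real.log_pos (by norm_num)
      have hL3 : 0 < Real.log 3 := Real.log_pos (by norm_num)
      nlinarith [hsq, mul_le_mul_of_nonneg_left hE (by positivity : (0:ℝ) ≤ (Real.log 3)^2)]
  have h0 : (0:ℝ) ∈ Icc (0:ℝ) 1 := by norm_num
  have h1m : (1:ℝ) ∈ Icc (0:ℝ) 1 := by norm_num
  have key := hconc.2 h0 h1m (show (0:ℝ) ≠ 1 by norm_num)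
    (show (0:ℝ) < 1 - t by linarith) ht0 (show (1 - t) + t = 1 by ring)
  have hF0 : F 0 = 1 := by norm_num [hF]
  have hF1 : F 1 = 1 := by
    simp only [hF, mul_one, Real.exp_log (by norm_num : (0:ℝ) < 3),
      Real.exp_log (by norm_num : (0:ℝ) < 2)]
    ring
  rw [hF0, hF1] at key
  simp only [smul_eq_mul, mul_one, mul_zero, add_zero, zero_add] at key
  show (1:ℝ) < F t
  linarith

/-- **The approximation-property constant for the fractional Laplacian.**
For `1 < α < 2`: `7 + 3^{3−α} − 2^{5−α} > 0` and
`1 < (8 − 2^{4−α}) / (2(7 + 3^{3−α} − 2^{5−α})) < 5/2`. -/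
theorem stmt7 (α : ℝ) (h1 : 1 < α) (h2 : α < 2) :
    0 < 7 + (3 : ℝ) ^ (3 - α) - (2 : ℝ) ^ (5 - α) ∧
    1 < (8 - (2 : ℝ) ^ (4 - α)) / (2 * (7 + (3 : ℝ) ^ (3 - α) - (2 : ℝ) ^ (5 - α))) ∧
    (8 - (2 : ℝ) ^ (4 - α)) / (2 * (7 + (3 : ℝ) ^ (3 - α) - (2 : ℝ) ^ (5 - α))) < 5 / 2 := by
  set t : ℝ := 2 - α with htdef
  have ht0 : 0 < t := by simp [htdef]; linarith
  have ht1 : t < 1 := by simp [htdef]; linarith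
  have e3 : (3 : ℝ) ^ (3 - α) = 3 * Real.exp (Real.log 3 * t) := by
    rw [Real.rpow_def_of_pos (by norm_num : (0:ℝ) < 3),
      show Real.log 3 * (3 - α) = Real.log 3 + Real.log 3 * t by rw [htdef]; ring,
      Real.exp_add, Real.exp_log (by norm_num : (0:ℝ) < 3)]
  have e5 : (2 : ℝ) ^ (5 - α) = 8 * Real.exp (Real.log 2 * t) := by
    rw [Real.rpow_def_of_pos (by norm_num : (0:ℝ) < 2),
      show Real.log 2 * (5 - α) = (Real.log 2 + (Real.log 2 + Real.log 2)) + Real.log 2 * t by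
        rw [htdef]; ring,
      Real.exp_add, Real.exp_add, Real.exp_add, Real.exp_log (by norm_num : (0:ℝ) < 2)]
    ring
  have e4 : (2 : ℝ) ^ (4 - α) = 4 * Real.exp (Real.log 2 * t) := by
    rw [Real.rpow_def_of_pos (by norm_num : (0:ℝ) < 2),
      show Real.log 2 * (4 - α) = (Real.log 2 + Real.log 2) + Real.log 2 * t by
        rw [htdef]; ring,
      Real.exp_add, Real.exp_add, Real.exp_log (by norm_num : (0:ℝ) < 2)]
    ring
  rw [e3, e4, e5]
  have hA := lemA t ht0 ht1
  have hB := lemB t ht0 ht1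
  have hC := lemC t ht0 ht1
  have hM : 0 < 2 * (7 + 3 * Real.exp (Real.log 3 * t) - 8 * Real.exp (Real.log 2 * t)) := by
    linarith
  refine ⟨by linarith, ?_, ?_⟩
  · rw [lt_div_iff₀ hM]
    nlinarith
  · rw [div_lt_div_iff₀ hM (by norm_num : (0:ℝ) < 2)]
    nlinarith
end
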